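/- Suppose T has two pairs (x₁,x₂) and (x₃,x₄) of sibling leaves such that x₁ and x₃ are siblings in F and x₂ and x₄ are siblings in F. Then along every root-leaf path of the search tree that first picks the cherry ({x₁},{x₂}) and then ({x₃},{x₄}), at least 2 of the edges e_F(x₁), e_F(x₂), e_F(x₃), e_F(x₄) are cut; hence the normal key ({x₁,x₂,x₃,x₄}, {e_F(x₁),…,e_F(x₄)}) has size 4 ≤ 2·b, i.e., lower bound b ≥ 2. -/

import Mathlib

/-- A rooted forest: each vertex has an optional parent, with no infinite
ancestor chains. -/
structure RForest (V : Type) where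
  parent : V → Option V
  wf : WellFounded fun a b : V => parent b = some a

namespace RForest

variable {V : Type}

/-- `a` is a (weak) ancestor of `x`, i.e. `x` is a descendant of `a`. -/
def Anc (F : RForest V) (x a : V) : Prop :=
  Relation.ReflTransGen (fun c p => F.parent c = some p) x a

/-- `p` lies on the path between `u₁` and `u₂` in `F` (via their lowest
common ancestor). -/
def OnPath (F : RForest V) (u₁ u₂ p : V) : Prop :=
  ∃ l, F.Anc u₁ l ∧ F.Anc u₂ l ∧
    (∀ l', F.Anc u₁ l' → F.Anc u₂ l' → F.Anc l l') ∧
    ((F.Anc u₁ p ∧ F.Anc p l) ∨ (F.Anc u₂ p ∧ F.Anc p l))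

/-- `D_F(u₁,u₂)`: heads of the edges whose tail is an inner vertex of the
path `u₁ ∼_F u₂` and whose head does not appear on the path. -/
def BranchSet (F : RForest V) (u₁ u₂ : V) : Set V :=
  {c | ∃ p, F.parent c = some p ∧ F.OnPath u₁ u₂ p ∧
    p ≠ u₁ ∧ p ≠ u₂ ∧ ¬ F.OnPath u₁ u₂ c}

def IsLeaf (F : RForest V) (x : V) : Prop :=
  ∀ c, F.parent c ≠ some x

lemma Anc.eq_of_isLeaf {F : RForest V} {u x : V} (h : F.Anc u x) (hx : F.IsLeaf x) :
    u = x := by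
  rcases Relation.ReflTransGen.cases_tail h with rfl | ⟨b, -, hbx⟩
  · rfl
  · exact absurd hbx (hx b)

lemma Anc.of_ne_of_parent_eq {F : RForest V} {x a y : V} (h : F.Anc x a) (hxa : x ≠ a)
    (hy : F.parent x = some y) : F.Anc y a := by
  rcases Relation.ReflTransGen.cases_head h with rfl | ⟨z, hz, hza⟩
  · exact absurd rfl hxa
  · rwa [Option.some_inj.mp (hy.symm.trans hz)]

lemma exists_lca (F : RForest V) {u₁ u₂ l : V} (h₁ : F.Anc u₁ l) (h₂ : F.Anc u₂ l) :
    ∃ m, F.Anc u₁ m ∧ F.Anc u₂ m ∧ ∀ l', F.Anc u₁ l' → F.Anc u₂ l' → F.Anc m l' := by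
  induction h₁ using Relation.ReflTransGen.head_induction_on with
  | refl => exact ⟨l, .refl, h₂, fun _ h _ => h⟩
  | @head a b hab _ ih =>
    by_cases h₂a : F.Anc u₂ a
    · exact ⟨a, .refl, h₂a, fun _ h _ => h⟩
    · obtain ⟨m, hbm, h₂m, hmin⟩ := ih
      refine ⟨m, .head hab hbm, h₂m, fun l' hal' h₂l' => hmin l' ?_ h₂l'⟩
      exact hal'.of_ne_of_parent_eq (by rintro rfl; exact h₂a h₂l') hab

lemma onPath_comm (F : RForest V) (u₁ u₂ p : V) : F.OnPath u₁ u₂ p ↔ F.OnPath u₂ u₁ p :=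
  ⟨fun ⟨l, h₁, h₂, hmin, h⟩ => ⟨l, h₂, h₁, fun l' h₂' h₁' => hmin l' h₁' h₂', h.symm⟩,
    fun ⟨l, h₂, h₁, hmin, h⟩ => ⟨l, h₁, h₂, fun l' h₁' h₂' => hmin l' h₂' h₁', h.symm⟩⟩

lemma branchSet_comm (F : RForest V) (u₁ u₂ : V) : F.BranchSet u₁ u₂ = F.BranchSet u₂ u₁ := by
  ext c
  simp only [BranchSet, onPath_comm F u₁ u₂]
  grind

lemma sibling_mem_branchSet (F : RForest V) {u₁ u₂ c p : V} (hu₁ : F.IsLeaf u₁)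
    (hu₂ : F.IsLeaf u₂) (hc : F.IsLeaf c) (h₁₂ : u₁ ≠ u₂) (hc₁ : c ≠ u₁) (hc₂ : c ≠ u₂)
    (hp₁ : F.parent u₁ = some p) (hpc : F.parent c = some p)
    (hcom : ∃ l, F.Anc u₁ l ∧ F.Anc u₂ l) : c ∈ F.BranchSet u₁ u₂ := by
  obtain ⟨l, h₁l, h₂l⟩ := hcom
  obtain ⟨m, h₁m, h₂m, hmin⟩ := F.exists_lca h₁l h₂l
  have hu₁m : u₁ ≠ m := by
    rintro rfl
    exact h₁₂ (h₂m.eq_of_isLeaf hu₁).symm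
  have hp : F.OnPath u₁ u₂ p :=
    ⟨m, h₁m, h₂m, hmin, .inl ⟨.single hp₁, h₁m.of_ne_of_parent_eq hu₁m hp₁⟩⟩
  refine ⟨p, hpc, hp, fun h => hu₁ u₁ (h ▸ hp₁), fun h => hu₂ u₁ (h ▸ hp₁), ?_⟩
  rintro ⟨-, -, -, -, ⟨h₁c, -⟩ | ⟨h₂c, -⟩⟩
  · exact hc₁ (h₁c.eq_of_isLeaf hc).symm
  · exact hc₂ (h₂c.eq_of_isLeaf hc).symm

/-- Picking the cherry `({x₁}, {x₂})` either cuts `e_F(x₁)` or `e_F(x₂)`, or creates `{x₁, x₂}`,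
which cuts the edges into their `F`-siblings `x₃` and `x₄`. -/
lemma cuts_of_pick (F : RForest V) {x₁ x₂ x₃ x₄ : V} {C : Set V} (hl₁ : F.IsLeaf x₁)
    (hl₂ : F.IsLeaf x₂) (hl₃ : F.IsLeaf x₃) (hl₄ : F.IsLeaf x₄) (h₁₂ : x₁ ≠ x₂)
    (h₃₁ : x₃ ≠ x₁) (h₃₂ : x₃ ≠ x₂) (h₄₁ : x₄ ≠ x₁) (h₄₂ : x₄ ≠ x₂)
    (h₁₃ : ∃ p, F.parent x₁ = some p ∧ F.parent x₃ = some p)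
    (h₂₄ : ∃ p, F.parent x₂ = some p ∧ F.parent x₄ = some p)
    (hpick : x₁ ∈ C ∨ x₂ ∈ C ∨ ((∃ l, F.Anc x₁ l ∧ F.Anc x₂ l) ∧ F.BranchSet x₁ x₂ ⊆ C)) :
    x₁ ∈ C ∨ x₂ ∈ C ∨ x₃ ∈ C ∧ x₄ ∈ C := by
  refine hpick.imp_right (Or.imp_right fun ⟨hcom, hsub⟩ => ⟨hsub ?_, hsub ?_⟩)
  · obtain ⟨p, hp₁, hp₃⟩ := h₁₃
    exact F.sibling_mem_branchSet hl₁ hl₂ hl₃ h₁₂ h₃₁ h₃₂ hp₁ hp₃ hcom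
  · obtain ⟨q, hq₂, hq₄⟩ := h₂₄
    rw [branchSet_comm]
    exact F.sibling_mem_branchSet hl₂ hl₁ hl₄ h₁₂.symm h₄₂ h₄₁ hq₂ hq₄
      (hcom.imp fun _ => And.symm)

end RForest

/-- A root-leaf path of the search tree is represented by the set `C` of vertices whose parent edge
it cuts; picking the cherry `({u}, {v})` isolates `u`, isolates `v`, or creates `{u, v}` by cutting
`D_F(u, v)`. -/
theorem stmt_14_general {V : Type} (F : RForest V)
    (x₁ x₂ x₃ x₄ : V)
    (hnodup : [x₁, x₂, x₃, x₄].Nodup)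
    (hleaf : ∀ x ∈ ({x₁, x₂, x₃, x₄} : Set V), ∀ c, F.parent c ≠ some x)
    (h13 : ∃ p, F.parent x₁ = some p ∧ F.parent x₃ = some p)
    (h24 : ∃ p, F.parent x₂ = some p ∧ F.parent x₄ = some p)
    (C : Set V)
    (hpick1 : x₁ ∈ C ∨ x₂ ∈ C ∨
      ((∃ l, F.Anc x₁ l ∧ F.Anc x₂ l) ∧ F.BranchSet x₁ x₂ ⊆ C))
    (hpick2 : x₃ ∈ C ∨ x₄ ∈ C ∨
      ((∃ l, F.Anc x₃ l ∧ F.Anc x₄ l) ∧ F.BranchSet x₃ x₄ ⊆ C)) :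
    2 ≤ (({x₁, x₂, x₃, x₄} : Set V) ∩ C).ncard := by
  simp only [List.nodup_cons, List.mem_cons, List.not_mem_nil, or_false, not_or,
    List.nodup_nil, and_true] at hnodup
  obtain ⟨⟨ne₁₂, ne₁₃, ne₁₄⟩, ⟨ne₂₃, ne₂₄⟩, ne₃₄, -⟩ := hnodup
  have hl₁ : F.IsLeaf x₁ := hleaf x₁ (by simp)
  have hl₂ : F.IsLeaf x₂ := hleaf x₂ (by simp)
  have hl₃ : F.IsLeaf x₃ := hleaf x₃ (by simp)
  have hl₄ : F.IsLeaf x₄ := hleaf x₄ (by simp)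
  have hcut₁ := F.cuts_of_pick hl₁ hl₂ hl₃ hl₄ ne₁₂ (Ne.symm ne₁₃) (Ne.symm ne₂₃)
    (Ne.symm ne₁₄) (Ne.symm ne₂₄) h13 h24 hpick1
  have hcut₂ := F.cuts_of_pick hl₃ hl₄ hl₁ hl₂ ne₃₄ ne₁₃ ne₁₄ ne₂₃ ne₂₄
    (h13.imp fun _ => And.symm) (h24.imp fun _ => And.symm) hpick2
  have pair : ∀ a ∈ ({x₁, x₂, x₃, x₄} : Set V), ∀ b ∈ ({x₁, x₂, x₃, x₄} : Set V),
      a ∈ C → b ∈ C → a ≠ b → 2 ≤ (({x₁, x₂, x₃, x₄} : Set V) ∩ C).ncard :=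
    fun a ha b hb haC hbC hab =>
      (Set.one_lt_ncard_iff ((Set.toFinite _).inter_of_left C)).2 ⟨a, b, ⟨ha, haC⟩, ⟨hb, hbC⟩, hab⟩
  rcases hcut₁ with h₁ | h₂ | ⟨h₃, h₄⟩
  · rcases hcut₂ with h₃ | h₄ | ⟨-, h₂⟩
    · exact pair x₁ (by simp) x₃ (by simp) h₁ h₃ ne₁₃
    · exact pair x₁ (by simp) x₄ (by simp) h₁ h₄ ne₁₄
    · exact pair x₁ (by simp) x₂ (by simp) h₁ h₂ ne₁₂
  · rcases hcut₂ with h₃ | h₄ | ⟨h₁, -⟩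
    · exact pair x₂ (by simp) x₃ (by simp) h₂ h₃ ne₂₃
    · exact pair x₂ (by simp) x₄ (by simp) h₂ h₄ ne₂₄
    · exact pair x₁ (by simp) x₂ (by simp) h₁ h₂ ne₁₂
  · exact pair x₃ (by simp) x₄ (by simp) h₃ h₄ ne₃₄

/-- Setting of Lemma 2: `x₁,x₃` are sibling leaves in `F` and so are
`x₂,x₄` (while `(x₁,x₂)` and `(x₃,x₄)` are cherries of `T`).  Along every
root-leaf path of the search tree that first picks `({x₁},{x₂})` and then
`({x₃},{x₄})` — i.e. whose cut `C` isolates `x₁`, isolates `x₂`, or creates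
`{x₁,x₂}` by cutting `D_F(x₁,x₂)`, and likewise for `(x₃,x₄)` — at least two
of the four edges `e_F(x₁),…,e_F(x₄)` are cut. -/
theorem stmt_14 {V : Type} [Fintype V] (F : RForest V)
    (hbin : ∀ v : V, ({c | F.parent c = some v} : Set V).ncard ≤ 2)
    (x₁ x₂ x₃ x₄ : V)
    (hnodup : [x₁, x₂, x₃, x₄].Nodup)
    (hleaf : ∀ x ∈ ({x₁, x₂, x₃, x₄} : Set V), ∀ c, F.parent c ≠ some x)
    (h13 : ∃ p, F.parent x₁ = some p ∧ F.parent x₃ = some p)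
    (h24 : ∃ p, F.parent x₂ = some p ∧ F.parent x₄ = some p)
    (C : Set V)
    (hpick1 : x₁ ∈ C ∨ x₂ ∈ C ∨
      ((∃ l, F.Anc x₁ l ∧ F.Anc x₂ l) ∧ F.BranchSet x₁ x₂ ⊆ C))
    (hpick2 : x₃ ∈ C ∨ x₄ ∈ C ∨
      ((∃ l, F.Anc x₃ l ∧ F.Anc x₄ l) ∧ F.BranchSet x₃ x₄ ⊆ C)) :
    2 ≤ (({x₁, x₂, x₃, x₄} : Set V) ∩ C).ncard :=
  stmt_14_general F x₁ x₂ x₃ x₄ hnodup hleaf h13 h24 C hpick1 hpick2
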